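/- No-go theorem for cyclic multimode squeezed vacua: fix N ≥ 3, parameters α : Fin N → ℂ, and C : (Fin N → ℕ) → ℂ satisfying the cyclic N-mode squeezing equations: for every i ∈ Fin N (with i+1 taken cyclically) and every occupation vector m : Fin N → ℕ, √(m i + 1) · C (m + eᵢ) equals αᵢ · √(m (i+1)) · C (m − e_{i+1}) when m (i+1) ≥ 1, and equals 0 when m (i+1) = 0. Then C (m) = 0 for every m ≠ 0; i.e. the only solutions are multiples of the vacuum |0,…,0⟩. -/

import Mathlib

/-!
Write `eᵢ` for the unit vectors and `i⁺` for the cyclic successor of `i`. Since `√(k + 1) ≠ 0`,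
the equation at `(i, m - eᵢ)` says: if `m i ≥ 1`, then `C m = 0` when `m i⁺ = 0`, and otherwise
`C m` is a multiple of `C (m - eᵢ - e_{i⁺})`. This descent strictly decreases `m`, so by
well-founded induction only the case `m - eᵢ - e_{i⁺} = 0` remains: then `m` is supported on
`{i, i⁺}`, and `m i⁺⁺ = 0` because `N ≥ 3` makes `i⁺⁺` distinct from both, so the first
alternative applies at `i⁺`.
-/

section CyclicDescent

variable {ι : Type*} [DecidableEq ι]

lemma Pi.single_one_le_iff {m : ι → ℕ} {i : ι} : Pi.single i 1 ≤ m ↔ 1 ≤ m i := by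
  refine ⟨fun h => by simpa using h i, fun h k => ?_⟩
  obtain rfl | hk := eq_or_ne k i
  · simpa using h
  · simp [Pi.single_eq_of_ne hk]

lemma Pi.sub_single_one_add_single_one {m : ι → ℕ} {i : ι} (h : 1 ≤ m i) :
    m - Pi.single i 1 + Pi.single i 1 = m :=
  tsub_add_cancel_of_le (Pi.single_one_le_iff.mpr h)

lemma Pi.sub_single_one_sub_single_one_lt {m : ι → ℕ} {i : ι} (j : ι) (h : 1 ≤ m i) :
    m - Pi.single i 1 - Pi.single j 1 < m := by
  refine lt_of_le_of_ne (tsub_le_self.trans tsub_le_self) fun heq => ?_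
  have := congrFun heq i
  simp only [Pi.sub_apply, Pi.single_eq_same] at this
  omega

theorem Pi.forall_ne_zero_of_cyclic_descent [Finite ι] {next : ι → ι} {P : (ι → ℕ) → Prop}
    (hnext : ∀ i, next i ≠ i) (hnext₂ : ∀ i, next (next i) ≠ i)
    (hend : ∀ i m, 1 ≤ m i → m (next i) = 0 → P m)
    (hpair : ∀ i m, 1 ≤ m i → 1 ≤ m (next i) →
      P (m - Pi.single i 1 - Pi.single (next i) 1) → P m) :
    ∀ m, m ≠ 0 → P m := by
  intro m
  induction m using WellFoundedLT.induction with
  | _ m ih =>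
  intro hm
  obtain ⟨i, hi⟩ : ∃ i, 1 ≤ m i := by
    by_contra! h
    exact hm (funext fun k => Nat.lt_one_iff.mp (h k))
  by_cases hi₁ : m (next i) = 0
  · exact hend i m hi hi₁
  set m' := m - Pi.single i 1 - Pi.single (next i) 1
  by_cases hm' : m' = 0
  · refine hend (next i) m (by omega) ?_
    have := congrFun hm' (next (next i))
    simpa [m', Pi.single_eq_of_ne (hnext₂ i), Pi.single_eq_of_ne (hnext (next i))] using this
  · exact hpair i m hi (by omega) (ih m' (Pi.sub_single_one_sub_single_one_lt _ hi) hm')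

end CyclicDescent

lemma Fin.add_one_ne_self {N : ℕ} [NeZero N] (hN : 2 ≤ N) (i : Fin N) : i + 1 ≠ i := by
  rw [Ne, add_eq_left, Fin.ext_iff, Fin.val_one', Nat.one_mod_eq_one.mpr (by omega)]
  simp

lemma Fin.add_one_add_one_ne_self {N : ℕ} [NeZero N] (hN : 3 ≤ N) (i : Fin N) :
    i + 1 + 1 ≠ i := by
  rw [Ne, add_assoc, add_eq_left, Fin.ext_iff, Fin.val_add, Fin.val_one', Nat.one_mod_eq_one.mpr
    (by omega), Nat.mod_eq_of_lt (by omega)]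
  simp

lemma eq_zero_of_sqrt_natCast_add_one_mul_eq_zero {k : ℕ} {z : ℂ}
    (h : (Real.sqrt (k + 1) : ℂ) * z = 0) : z = 0 :=
  (mul_eq_zero.mp h).resolve_left
    (Complex.ofReal_ne_zero.mpr (Real.sqrt_pos.mpr (by positivity)).ne')

/-- No-go theorem for cyclic multimode squeezed vacua: for `N ≥ 3` modes, any
solution of the cyclic N-mode squeezing equations vanishes away from the vacuum
occupation vector `0`. -/
theorem cyclic_N_mode_no_go (N : ℕ) [NeZero N] (hN : 3 ≤ N) (α : Fin N → ℂ)
    (C : (Fin N → ℕ) → ℂ)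
    (hrec : ∀ (i : Fin N) (m : Fin N → ℕ), 1 ≤ m (i + 1) →
      (Real.sqrt (m i + 1) : ℂ) * C (m + Pi.single i 1) =
        α i * (Real.sqrt (m (i + 1)) : ℂ) * C (m - Pi.single (i + 1) 1))
    (hrec0 : ∀ (i : Fin N) (m : Fin N → ℕ), m (i + 1) = 0 →
      (Real.sqrt (m i + 1) : ℂ) * C (m + Pi.single i 1) = 0) :
    ∀ m : Fin N → ℕ, m ≠ 0 → C m = 0 := by
  have hsucc := Fin.add_one_ne_self (by omega : 2 ≤ N)
  refine Pi.forall_ne_zero_of_cyclic_descent hsucc (Fin.add_one_add_one_ne_self hN) ?_ ?_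
  · intro i m hi hi₁
    have h := hrec0 i (m - Pi.single i 1) (by simp [Pi.single_eq_of_ne (hsucc i), hi₁])
    rw [Pi.sub_single_one_add_single_one hi] at h
    exact eq_zero_of_sqrt_natCast_add_one_mul_eq_zero h
  · intro i m hi hi₁ hdesc
    have h := hrec i (m - Pi.single i 1) (by simpa [Pi.single_eq_of_ne (hsucc i)] using hi₁)
    rw [Pi.sub_single_one_add_single_one hi, hdesc, mul_zero] at h
    exact eq_zero_of_sqrt_natCast_add_one_mul_eq_zero h
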